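/- Let n, k ≥ 1 and let L : ℝⁿ × (ℝⁿ)ᵏ → ℝ be smooth and 2k-homogeneous, i.e. L(x, λ y⁽¹⁾, …, λᵏ y⁽ᵏ⁾) = λ²ᵏ L(x, y⁽¹⁾, …, y⁽ᵏ⁾) for all λ > 0 (for instance L = F² with F the fundamental function of a Finsler space of order k). Assume the matrix g_{ij} = ½ ∂²L/∂y⁽ᵏ⁾ⁱ∂y⁽ᵏ⁾ʲ is invertible at every point, with inverse gⁱʲ. Then the canonical k-semispray coefficients Gⁱ = (1/(2(k+1))) Σⱼ gⁱʲ ( Γ(∂L/∂y⁽ᵏ⁾ʲ) − ∂L/∂y⁽ᵏ⁻¹⁾ʲ ), where Γ f = Σₕ ( y⁽¹⁾ʰ ∂f/∂xʰ + 2y⁽²⁾ʰ ∂f/∂y⁽¹⁾ʰ + ⋯ + k y⁽ᵏ⁾ʰ ∂f/∂y⁽ᵏ⁻¹⁾ʰ ), are (k+1)-homogeneous: Gⁱ(x, λ y⁽¹⁾, …, λᵏ y⁽ᵏ⁾) = λᵏ⁺¹ Gⁱ(x, y⁽¹⁾, …, y⁽ᵏ⁾) for all λ > 0. Hence the canonical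 k-semispray of a Finsler space of order k is a k-spray. -/

import Mathlib

/- STATEMENT 12: Let L be smooth and 2k-homogeneous (e.g. L = F² for a Finsler
space of order k) with fundamental tensor g_{ij} = ½ ∂²L/∂y⁽ᵏ⁾ⁱ∂y⁽ᵏ⁾ʲ invertible
at every point, with inverse gⁱʲ.  Then the canonical k-semispray coefficients
Gⁱ = (1/(2(k+1))) Σⱼ gⁱʲ (Γ(∂L/∂y⁽ᵏ⁾ʲ) − ∂L/∂y⁽ᵏ⁻¹⁾ʲ), where
Γ f = Σₕ (y⁽¹⁾ʰ ∂f/∂xʰ + 2y⁽²⁾ʰ ∂f/∂y⁽¹⁾ʰ + ⋯ + k y⁽ᵏ⁾ʰ ∂f/∂y⁽ᵏ⁻¹⁾ʰ), are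
(k+1)-homogeneous; hence the canonical k-semispray of a Finsler space of order
k is a k-spray.  Vertical slots are 0-indexed (y⁽ᵏ⁾ is slot k−1); for k = 1 the
slot "y⁽ᵏ⁻¹⁾ = y⁽⁰⁾" is the base variable x. -/

noncomputable section

abbrev Pt (n k : ℕ) : Type := (Fin n → ℝ) × (Fin k → Fin n → ℝ)

def scale (n k : ℕ) (lam : ℝ) (p : Pt n k) : Pt n k :=
  (p.1, fun a => lam ^ ((a : ℕ) + 1) • p.2 a)

/-- The partial derivative ∂f/∂xⁱ at p. -/
def pderivX (n k : ℕ) (f : Pt n k → ℝ) (i : Fin n) (p : Pt n k) : ℝ :=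
  fderiv ℝ f p (Pi.single i 1, 0)

/-- The partial derivative ∂f/∂y⁽ᵃ⁺¹⁾ʰ at p. -/
def pderivY (n k : ℕ) (f : Pt n k → ℝ) (a : Fin k) (h : Fin n) (p : Pt n k) : ℝ :=
  fderiv ℝ f p (0, Pi.single a (Pi.single h 1))

/-- The partial derivative ∂f/∂y⁽ᵏ⁻¹⁾ʲ; for k = 1, y⁽⁰⁾ = x is the base variable. -/
def pderivPrev (n k : ℕ) (f : Pt n k → ℝ) (j : Fin n) (p : Pt n k) : ℝ :=
  if h : 2 ≤ k then pderivY n k f ⟨k - 2, by omega⟩ j p else pderivX n k f j p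

/-- The nonlinear operator
Γ f = Σₕ (y⁽¹⁾ʰ ∂f/∂xʰ + Σ_{α=1}^{k−1} (α+1) y⁽ᵅ⁺¹⁾ʰ ∂f/∂y⁽ᵅ⁾ʰ). -/
def GammaOp (n k : ℕ) (hk : 0 < k) (f : Pt n k → ℝ) (p : Pt n k) : ℝ :=
  (∑ h, p.2 ⟨0, hk⟩ h * pderivX n k f h p) +
  ∑ a : Fin k, ∑ h,
    (if ha : (a : ℕ) + 1 < k
      then (((a : ℕ) + 2 : ℕ) : ℝ) * p.2 ⟨(a : ℕ) + 1, ha⟩ h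
      else 0) * pderivY n k f a h p

/-- The fundamental (metric) tensor g_{ij} = ½ ∂²L/∂y⁽ᵏ⁾ⁱ∂y⁽ᵏ⁾ʲ. -/
def gmet (n k : ℕ) (hk : 0 < k) (L : Pt n k → ℝ) (i j : Fin n) (p : Pt n k) : ℝ :=
  (2 : ℝ)⁻¹ *
    pderivY n k (pderivY n k L ⟨k - 1, by omega⟩ j) ⟨k - 1, by omega⟩ i p

/-- The canonical k-semispray coefficients
Gⁱ = (1/(2(k+1))) Σⱼ gⁱʲ (Γ(∂L/∂y⁽ᵏ⁾ʲ) − ∂L/∂y⁽ᵏ⁻¹⁾ʲ). -/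
def canonG (n k : ℕ) (hk : 0 < k) (L : Pt n k → ℝ)
    (ginv : Fin n → Fin n → Pt n k → ℝ) (i : Fin n) (p : Pt n k) : ℝ :=
  (2 * ((k : ℝ) + 1))⁻¹ *
    ∑ j, ginv i j p *
      (GammaOp n k hk (pderivY n k L ⟨k - 1, by omega⟩ j) p - pderivPrev n k L j p)


/-! ### Auxiliary machinery for the proof -/

/-- The scaling map as a continuous linear map. -/
def scaleCLM (n k : ℕ) (lam : ℝ) : Pt n k →L[ℝ] Pt n k :=
  (ContinuousLinearMap.fst ℝ _ _).prod
    ((ContinuousLinearMap.pi (fun a : Fin k =>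
        (lam ^ ((a : ℕ) + 1)) • ContinuousLinearMap.proj a)).comp
      (ContinuousLinearMap.snd ℝ _ _))

lemma key (n k : ℕ) (f : Pt n k → ℝ) (hf : Differentiable ℝ f) (lam c : ℝ)
    (homf : ∀ p, f (scale n k lam p) = c * f p) (p v : Pt n k) :
    fderiv ℝ f (scale n k lam p) (scaleCLM n k lam v) = c * fderiv ℝ f p v := by
  have hcomp : (f ∘ (scaleCLM n k lam)) = fun q => c * f q := by
    funext q; exact homf q
  have h1 : fderiv ℝ (f ∘ (scaleCLM n k lam)) p
      = (fderiv ℝ f (scaleCLM n k lam p)).comp (scaleCLM n k lam) := by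
    rw [fderiv_comp p (hf _) (scaleCLM n k lam).differentiableAt,
      (scaleCLM n k lam).fderiv]
  have h2 : fderiv ℝ (fun q => c * f q) p = c • fderiv ℝ f p :=
    fderiv_const_mul (hf p) c
  rw [hcomp, h2] at h1
  have := congrArg (fun φ : Pt n k →L[ℝ] ℝ => φ v) h1.symm
  simpa [show scaleCLM n k lam p = scale n k lam p from rfl] using this

lemma pderivX_scale (n k : ℕ) (f : Pt n k → ℝ) (hf : Differentiable ℝ f) (lam c : ℝ)
    (homf : ∀ p, f (scale n k lam p) = c * f p) (i : Fin n) (p : Pt n k) :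
    pderivX n k f i (scale n k lam p) = c * pderivX n k f i p := by
  have h := key n k f hf lam c homf p (Pi.single i 1, 0)
  have hv : scaleCLM n k lam ((Pi.single i 1 : Fin n → ℝ), (0 : Fin k → Fin n → ℝ))
      = (Pi.single i 1, 0) := by
    refine Prod.ext rfl ?_
    funext a; show lam ^ ((a : ℕ) + 1) • (0 : Fin n → ℝ) = 0; simp
  rw [hv] at h
  exact h

lemma pderivY_scale (n k : ℕ) (f : Pt n k → ℝ) (hf : Differentiable ℝ f) (lam c : ℝ)
    (hlam : lam ≠ 0)
    (homf : ∀ p, f (scale n k lam p) = c * f p) (a : Fin k) (i : Fin n) (p : Pt n k) :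
    pderivY n k f a i (scale n k lam p)
      = (c / lam ^ ((a : ℕ) + 1)) * pderivY n k f a i p := by
  have h := key n k f hf lam c homf p (0, (Pi.single a (Pi.single i 1) : Fin k → Fin n → ℝ))
  have hv : scaleCLM n k lam ((0 : Fin n → ℝ), (Pi.single a (Pi.single i 1) : Fin k → Fin n → ℝ))
      = lam ^ ((a : ℕ) + 1) • ((0 : Fin n → ℝ), (Pi.single a (Pi.single i 1) : Fin k → Fin n → ℝ)) := by
    refine Prod.ext ?_ ?_
    · show (0 : Fin n → ℝ) = lam ^ ((a : ℕ) + 1) • (0 : Fin n → ℝ)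
      simp
    funext b
    show lam ^ ((b : ℕ) + 1) • (Pi.single a (Pi.single i 1) : Fin k → Fin n → ℝ) b
      = (lam ^ ((a : ℕ) + 1) • (Pi.single a (Pi.single i 1) : Fin k → Fin n → ℝ)) b
    rcases eq_or_ne b a with rfl | hba
    · simp
    · simp [Pi.single_eq_of_ne hba]
  rw [hv, map_smul] at h
  have hpow : lam ^ ((a : ℕ) + 1) ≠ 0 := pow_ne_zero _ hlam
  rw [smul_eq_mul] at h
  field_simp [pderivY] at h ⊢
  unfold pderivY
  linarith [h]

lemma contDiff_pderivY (n k : ℕ) (f : Pt n k → ℝ) (hf : ContDiff ℝ (⊤ : ℕ∞) f)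
    (a : Fin k) (i : Fin n) : ContDiff ℝ (⊤ : ℕ∞) (pderivY n k f a i) :=
  (ContinuousLinearMap.apply ℝ ℝ
    ((0 : Fin n → ℝ), (Pi.single a (Pi.single i 1) : Fin k → Fin n → ℝ))).contDiff.comp
    (hf.fderiv_right (by simp))

theorem stmt_12 (n k : ℕ) (hn : 1 ≤ n) (hk : 0 < k)
    (L : Pt n k → ℝ) (hL : ContDiff ℝ (⊤ : ℕ∞) L)
    (hom : ∀ lam : ℝ, 0 < lam → ∀ p : Pt n k,
      L (scale n k lam p) = lam ^ (2 * k) * L p)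
    (ginv : Fin n → Fin n → Pt n k → ℝ)
    (hginv : ∀ (p : Pt n k) (i m : Fin n),
      (∑ j, ginv i j p * gmet n k hk L j m p) = if i = m then 1 else 0)
    (hginv' : ∀ (p : Pt n k) (i m : Fin n),
      (∑ j, gmet n k hk L i j p * ginv j m p) = if i = m then 1 else 0) :
    ∀ (i : Fin n) (lam : ℝ), 0 < lam → ∀ p : Pt n k,
      canonG n k hk L ginv i (scale n k lam p)
        = lam ^ (k + 1) * canonG n k hk L ginv i p := by
  intro i lam hlam p
  have hlam0 : lam ≠ 0 := ne_of_gt hlam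
  have hdL : Differentiable ℝ L := hL.differentiable (by simp)
  have hk1 : k - 1 + 1 = k := by omega
  have homL : ∀ q, L (scale n k lam q) = lam ^ (2 * k) * L q := hom lam hlam
  have hfjd : ∀ j : Fin n, Differentiable ℝ (pderivY n k L ⟨k - 1, by omega⟩ j) :=
    fun j => (contDiff_pderivY n k L hL _ j).differentiable (by simp)
  -- homogeneity of degree k of the top vertical derivatives of L
  have homfj : ∀ (j : Fin n) (q : Pt n k),
      pderivY n k L ⟨k - 1, by omega⟩ j (scale n k lam q)
        = lam ^ k * pderivY n k L ⟨k - 1, by omega⟩ j q := by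
    intro j q
    have h := pderivY_scale n k L hdL lam (lam ^ (2 * k)) hlam0 homL ⟨k - 1, by omega⟩ j q
    have hc : lam ^ (2 * k) / lam ^ ((k - 1) + 1) = lam ^ k := by
      rw [hk1, show 2 * k = k + k from by omega, pow_add]
      field_simp
    rw [h, show lam ^ (2 * k) / lam ^ (((⟨k - 1, by omega⟩ : Fin k) : ℕ) + 1) = lam ^ k
      from hc]
  -- invariance of the fundamental tensor
  have hgmet : ∀ (q : Pt n k) (a m : Fin n),
      gmet n k hk L a m (scale n k lam q) = gmet n k hk L a m q := by
    intro q a m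
    have h := pderivY_scale n k (pderivY n k L ⟨k - 1, by omega⟩ m) (hfjd m) lam
      (lam ^ k) hlam0 (fun q => homfj m q) ⟨k - 1, by omega⟩ a q
    have hc : lam ^ k / lam ^ ((k - 1) + 1) = 1 := by
      rw [hk1]; field_simp
    rw [gmet, gmet, h]
    rw [show lam ^ k / lam ^ (((⟨k - 1, by omega⟩ : Fin k) : ℕ) + 1) = 1 from hc, one_mul]
  -- invariance of the inverse tensor
  have hginvsc : ∀ m : Fin n, ginv i m (scale n k lam p) = ginv i m p := by
    intro m
    have hA : (∑ l, (∑ j, ginv i j (scale n k lam p) * gmet n k hk L j l p) * ginv l m p)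
        = ginv i m p := by
      have h1 : ∀ l : Fin n, (∑ j, ginv i j (scale n k lam p) * gmet n k hk L j l p)
          = if i = l then 1 else 0 := by
        intro l
        rw [show (∑ j, ginv i j (scale n k lam p) * gmet n k hk L j l p)
            = ∑ j, ginv i j (scale n k lam p) * gmet n k hk L j l (scale n k lam p) from
          Finset.sum_congr rfl fun j _ => by rw [hgmet p j l]]
        exact hginv _ i l
      simp only [h1, ite_mul, one_mul, zero_mul]
      simp
    have hB : (∑ l, (∑ j, ginv i j (scale n k lam p) * gmet n k hk L j l p) * ginv l m p)
        = ginv i m (scale n k lam p) := by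
      calc ∑ l, (∑ j, ginv i j (scale n k lam p) * gmet n k hk L j l p) * ginv l m p
          = ∑ l, ∑ j, ginv i j (scale n k lam p) * gmet n k hk L j l p * ginv l m p := by
            simp [Finset.sum_mul]
        _ = ∑ j, ∑ l, ginv i j (scale n k lam p) * gmet n k hk L j l p * ginv l m p :=
            Finset.sum_comm
        _ = ∑ j, ginv i j (scale n k lam p) * ∑ l, gmet n k hk L j l p * ginv l m p := by
            simp [Finset.mul_sum, mul_assoc]
        _ = ∑ j, ginv i j (scale n k lam p) * (if j = m then 1 else 0) :=
            Finset.sum_congr rfl fun j _ => by rw [hginv' p j m]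
        _ = ginv i m (scale n k lam p) := by simp
    rw [← hB, hA]
  -- scaling of the Gamma operator applied to the top vertical derivatives
  have hGam : ∀ j : Fin n,
      GammaOp n k hk (pderivY n k L ⟨k - 1, by omega⟩ j) (scale n k lam p)
        = lam ^ (k + 1) * GammaOp n k hk (pderivY n k L ⟨k - 1, by omega⟩ j) p := by
    intro j
    rw [GammaOp, GammaOp, mul_add]
    congr 1
    · rw [Finset.mul_sum]
      refine Finset.sum_congr rfl fun h _ => ?_
      rw [pderivX_scale n k _ (hfjd j) lam (lam ^ k) (homfj j) h p]
      simp only [scale, Pi.smul_apply, smul_eq_mul]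
      ring
    · rw [Finset.mul_sum]
      refine Finset.sum_congr rfl fun a _ => ?_
      rw [Finset.mul_sum]
      refine Finset.sum_congr rfl fun h _ => ?_
      rw [pderivY_scale n k _ (hfjd j) lam (lam ^ k) hlam0 (homfj j) a h p]
      by_cases ha : (a : ℕ) + 1 < k
      · simp only [dif_pos ha, scale, Pi.smul_apply, smul_eq_mul]
        have hpow : lam ^ ((a : ℕ) + 1) ≠ 0 := pow_ne_zero _ hlam0
        field_simp
        ring
      · simp only [dif_neg ha, zero_mul]
        ring
  -- scaling of the pderivPrev term
  have hPrev : ∀ j : Fin n,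
      pderivPrev n k L j (scale n k lam p) = lam ^ (k + 1) * pderivPrev n k L j p := by
    intro j
    rw [pderivPrev, pderivPrev]
    by_cases h2 : 2 ≤ k
    · simp only [dif_pos h2]
      rw [pderivY_scale n k L hdL lam (lam ^ (2 * k)) hlam0 homL ⟨k - 2, by omega⟩ j p]
      have hc : lam ^ (2 * k) / lam ^ ((k - 2) + 1) = lam ^ (k + 1) := by
        rw [show 2 * k = (k + 1) + ((k - 2) + 1) from by omega, pow_add]
        field_simp
      rw [show lam ^ (2 * k) / lam ^ (((⟨k - 2, by omega⟩ : Fin k) : ℕ) + 1) = lam ^ (k + 1)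
        from hc]
    · simp only [dif_neg h2]
      rw [pderivX_scale n k L hdL lam (lam ^ (2 * k)) homL j p,
        show 2 * k = k + 1 from by omega]
  -- assembling
  have hsum : (∑ j, ginv i j (scale n k lam p) *
        (GammaOp n k hk (pderivY n k L ⟨k - 1, by omega⟩ j) (scale n k lam p)
          - pderivPrev n k L j (scale n k lam p)))
      = lam ^ (k + 1) * ∑ j, ginv i j p *
        (GammaOp n k hk (pderivY n k L ⟨k - 1, by omega⟩ j) p - pderivPrev n k L j p) := by
    rw [Finset.mul_sum]
    refine Finset.sum_congr rfl fun j _ => ?_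
    rw [hginvsc j, hGam j, hPrev j]
    ring
  rw [canonG, canonG, hsum]
  ring
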